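/- If T is the weighted block tree of a graph G on n vertices and T has exactly three centroids, then the unique central centroid of T is a block vertex B of weight 0, and the block B is an edge (K2) of G. -/

import Mathlib

open SimpleGraph
open scoped Classical

/-- v is a cut vertex: its removal disconnects two vertices that were connected. -/
def IsCutVertex {V : Type*} (G : SimpleGraph V) (v : V) : Prop :=
  ∃ a b : ({u : V | u ≠ v} : Set V),
    G.Reachable a.1 b.1 ∧ ¬ (G.induce {u : V | u ≠ v}).Reachable a b

/-- B is a nonempty biconnected set: the induced subgraph is connected and remains
connected (in the sense of pairwise reachability) after removing any one vertex. -/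
def IsBiconn {V : Type*} (G : SimpleGraph V) (B : Set V) : Prop :=
  B.Nonempty ∧ (∀ x y : B, (G.induce B).Reachable x y) ∧
  ∀ b ∈ B, ∀ x y : ↥(B \ {b}), (G.induce (B \ {b})).Reachable x y

/-- A block is a maximal biconnected set of vertices. -/
def IsBlock {V : Type*} (G : SimpleGraph V) (B : Set V) : Prop :=
  IsBiconn G B ∧ ∀ B', B ⊆ B' → IsBiconn G B' → B = B'

/-- Vertex set of the block tree of G: cut vertices and blocks. -/
def BTVert {V : Type*} (G : SimpleGraph V) : Type _ :=
  {v : V // IsCutVertex G v} ⊕ {B : Set V // IsBlock G B}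

/-- The block tree of G: a cut vertex v is adjacent to a block B iff v ∈ B. -/
def blockTree {V : Type*} (G : SimpleGraph V) : SimpleGraph (BTVert G) where
  Adj x y :=
    (∃ v B, x = Sum.inl v ∧ y = Sum.inr B ∧ v.1 ∈ B.1) ∨
    (∃ v B, x = Sum.inr B ∧ y = Sum.inl v ∧ v.1 ∈ B.1)
  symm := by
    constructor
    rintro x y (⟨v, B, rfl, rfl, h⟩ | ⟨v, B, rfl, rfl, h⟩)
    · exact Or.inr ⟨v, B, rfl, rfl, h⟩
    · exact Or.inl ⟨v, B, rfl, rfl, h⟩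
  loopless := by
    constructor
    rintro x (⟨v, B, rfl, h, -⟩ | ⟨v, B, rfl, h, -⟩) <;> simp at h

/-- The weight function of the weighted block tree: cut vertices weigh 1 and a block
weighs its number of non-cut vertices. -/
noncomputable def btWeight {V : Type*} (G : SimpleGraph V) : BTVert G → ℕ :=
  Sum.elim (fun _ => 1) (fun B => (B.1 \ {v | IsCutVertex G v}).ncard)

/-- A leaf is a vertex with exactly one neighbor. -/
def IsLeaf {V : Type*} (T : SimpleGraph V) (v : V) : Prop :=
  (T.neighborSet v).ncard = 1
/-- Weight of the connected component of u in T - v. -/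
noncomputable def compWeight {V : Type*} [Fintype V] (T : SimpleGraph V) (w : V → ℕ)
    (v u : V) : ℕ :=
  ∑ y : V, if ∃ p : T.Walk u y, v ∉ p.support then w y else 0

/-- Heaviest subtree weight. -/
noncomputable def hs {V : Type*} [Fintype V] (T : SimpleGraph V) (w : V → ℕ) (v : V) : ℕ :=
  Finset.univ.sup fun u => compWeight T w v u

/-- A centroid minimizes the heaviest subtree weight. -/
def IsCentroid {V : Type*} [Fintype V] (T : SimpleGraph V) (w : V → ℕ) (v : V) : Prop :=
  ∀ u, hs T w v ≤ hs T w u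

/-- Eccentricity of c within the set of centroids. -/
noncomputable def centroidEcc {V : Type*} [Fintype V] (T : SimpleGraph V) (w : V → ℕ)
    (c : V) : ℕ :=
  Finset.univ.sup fun x => if IsCentroid T w x then T.dist c x else 0

/-- A central centroid is a center of the path of centroids. -/
def IsCentralCentroid {V : Type*} [Fintype V] (T : SimpleGraph V) (w : V → ℕ) (c : V) : Prop :=
  IsCentroid T w c ∧ ∀ c', IsCentroid T w c' → centroidEcc T w c ≤ centroidEcc T w c'

/-!
The block tree is a tree: two blocks sharing a vertex meet at a cut vertex, which makes it
connected, and the blocks met by a cycle of the block tree would have a biconnected union,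
contradicting the maximality of blocks.

In a weighted tree the heaviest-branch function `hs` is convex along paths, so the centroids
form a path; with three centroids it is `x - z - y`, and `z` is the central one. Comparing the
branches of `T - z` with those of `T - x` and `T - y` shows that `z` is weightless and that any
further neighbour of `z` would span a weightless branch. In a block tree no edge joins two
weightless vertices (cut vertices weigh 1), so `z` is a block whose vertices are all cut
vertices, i.e. all adjacent to `z`: the block has exactly two vertices, adjacent since the block
is connected.
-/

namespace SimpleGraph

variable {V : Type*} {G : SimpleGraph V}

def ReachableIn (G : SimpleGraph V) (S : Set V) (x y : V) : Prop :=
  ∃ p : G.Walk x y, ∀ z ∈ p.support, z ∈ S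

namespace ReachableIn

variable {S S' : Set V} {x y z : V}

lemma refl (hx : x ∈ S) : G.ReachableIn S x x :=
  ⟨.nil, by simpa⟩

lemma symm (h : G.ReachableIn S x y) : G.ReachableIn S y x :=
  let ⟨p, hp⟩ := h
  ⟨p.reverse, by simpa using hp⟩

lemma trans (h : G.ReachableIn S x y) (h' : G.ReachableIn S y z) : G.ReachableIn S x z := by
  obtain ⟨p, hp⟩ := h
  obtain ⟨q, hq⟩ := h'
  exact ⟨p.append q, fun u hu => (Walk.mem_support_append_iff p q).1 hu |>.elim (hp u) (hq u)⟩

lemma mono (h : G.ReachableIn S x y) (hS : S ⊆ S') : G.ReachableIn S' x y :=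
  let ⟨p, hp⟩ := h
  ⟨p, fun u hu => hS (hp u hu)⟩

lemma right_mem (h : G.ReachableIn S x y) : y ∈ S :=
  let ⟨p, hp⟩ := h
  hp y p.end_mem_support

lemma exists_isPath (h : G.ReachableIn S x y) :
    ∃ p : G.Walk x y, p.IsPath ∧ ∀ z ∈ p.support, z ∈ S :=
  let ⟨p, hp⟩ := h
  ⟨p.toPath, p.toPath.2, fun z hz => hp z (Walk.support_toPath_subset_support p hz)⟩

lemma sdiff_singleton (h : G.ReachableIn S x y) (hz : ¬ G.ReachableIn S x z) :
    G.ReachableIn (S \ {z}) x y := by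
  obtain ⟨p, hp⟩ := h
  refine ⟨p, fun u hu => ⟨hp u hu, fun huz => hz ?_⟩⟩
  subst huz
  exact ⟨p.takeUntil u hu, fun v hv => hp v (p.support_takeUntil_subset_support hu hv)⟩

end ReachableIn

lemma reachableIn_iff_reachable_induce {S : Set V} {x y : S} :
    G.ReachableIn S x y ↔ (G.induce S).Reachable x y := by
  constructor
  · rintro ⟨p, hp⟩
    exact ⟨p.induce S hp⟩
  · rintro ⟨p⟩
    refine ⟨p.map (Embedding.induce S).toHom, fun z hz => ?_⟩
    obtain ⟨u, -, rfl⟩ := List.mem_map.1 (Walk.support_map _ p ▸ hz)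
    exact u.2

lemma preconnected_induce_iff_reachableIn {S : Set V} :
    (G.induce S).Preconnected ↔ ∀ x ∈ S, ∀ y ∈ S, G.ReachableIn S x y := by
  simp only [Preconnected, Subtype.forall, ← reachableIn_iff_reachable_induce]

lemma preconnected_induce_of_reachableIn {S : Set V} (a : V)
    (h : ∀ x ∈ S, G.ReachableIn S x a) : (G.induce S).Preconnected :=
  preconnected_induce_iff_reachableIn.2 fun x hx y hy => (h x hx).trans (h y hy).symm

lemma preconnected_induce_of_subsingleton {S : Set V} (hS : S.Subsingleton) :
    (G.induce S).Preconnected :=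
  fun x y => by rw [Subtype.ext (hS x.2 y.2)]

lemma reachableIn_compl_singleton_iff {m x y : V} :
    G.ReachableIn {m}ᶜ x y ↔ ∃ p : G.Walk x y, m ∉ p.support := by
  simp only [ReachableIn, Set.mem_compl_singleton_iff]
  exact exists_congr fun p => ⟨fun h hm => h m hm rfl, fun h z hz hzm => h (hzm ▸ hz)⟩

lemma Walk.IsPath.reachableIn_start_or_end {x y z : V} {p : G.Walk x y} (hp : p.IsPath)
    {D : Set V} (hD : D.Subsingleton) (hz : z ∈ {u | u ∈ p.support} \ D) :
    G.ReachableIn ({u | u ∈ p.support} \ D) z x ∨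
      G.ReachableIn ({u | u ∈ p.support} \ D) z y := by
  obtain ⟨q, r, -, -, rfl⟩ := hp.mem_support_iff_exists_append.1 hz.1
  by_cases hq : ∀ b ∈ D, b ∉ q.support
  · refine .inl ⟨q.reverse, fun u hu => ?_⟩
    rw [Walk.support_reverse, List.mem_reverse] at hu
    exact ⟨Walk.mem_support_append_iff q r |>.2 (.inl hu), fun huD => hq u huD hu⟩
  · push Not at hq
    obtain ⟨b, hbD, hbq⟩ := hq
    refine .inr ⟨r, fun u hu =>
      ⟨Walk.mem_support_append_iff q r |>.2 (.inr hu), fun huD => ?_⟩⟩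
    exact hp.ne_of_mem_support_of_append (fun h => hz.2 (h ▸ huD)) hbq hu (hD hbD huD)

end SimpleGraph

section Biconnected

variable {V : Type*} {G : SimpleGraph V} {B B' : Set V}

lemma isBiconn_iff :
    IsBiconn G B ↔
      B.Nonempty ∧ ∀ D : Set V, D.Subsingleton → (G.induce (B \ D)).Preconnected := by
  constructor
  · rintro ⟨hne, hconn, hdel⟩
    refine ⟨hne, fun D hD => ?_⟩
    rcases hD.eq_empty_or_singleton with rfl | ⟨b, rfl⟩
    · rwa [Set.sdiff_empty]
    · by_cases hb : b ∈ B
      · exact hdel b hb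
      · rwa [Set.sdiff_singleton_eq_self hb]
  · rintro ⟨hne, h⟩
    have hB := h ∅ Set.subsingleton_empty
    rw [Set.sdiff_empty] at hB
    exact ⟨hne, hB, fun b _ => h {b} Set.subsingleton_singleton⟩

lemma IsBiconn.reachableIn (h : IsBiconn G B) {D : Set V} (hD : D.Subsingleton) {x y : V}
    (hx : x ∈ B \ D) (hy : y ∈ B \ D) : G.ReachableIn (B \ D) x y :=
  preconnected_induce_iff_reachableIn.1 ((isBiconn_iff.1 h).2 D hD) x hx y hy

lemma isBiconn_singleton (v : V) : IsBiconn G {v} :=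
  isBiconn_iff.2 ⟨Set.singleton_nonempty v, fun _ _ =>
    preconnected_induce_of_subsingleton (Set.subsingleton_singleton.anti Set.sdiff_subset)⟩

lemma isBiconn_pair {u v : V} (h : G.Adj u v) : IsBiconn G {u, v} := by
  refine isBiconn_iff.2 ⟨Set.insert_nonempty u {v}, fun D hD => ?_⟩
  rcases hD.eq_empty_or_singleton with rfl | ⟨b, rfl⟩
  · rw [Set.sdiff_empty]
    exact (induce_pair_connected_of_adj h).preconnected
  by_cases hb : b = u ∨ b = v
  · refine preconnected_induce_of_subsingleton fun x hx y hy => ?_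
    simp only [Set.mem_sdiff, Set.mem_insert_iff, Set.mem_singleton_iff] at hx hy
    grind
  · rw [Set.sdiff_singleton_eq_self (by simpa using hb)]
    exact (induce_pair_connected_of_adj h).preconnected

lemma IsBiconn.exists_isBlock_superset [Finite V] (h : IsBiconn G B) :
    ∃ B', IsBlock G B' ∧ B ⊆ B' := by
  obtain ⟨B', hmax⟩ :=
    (Set.toFinite {B' | IsBiconn G B' ∧ B ⊆ B'}).exists_maximal ⟨B, h, le_rfl⟩
  exact ⟨B', ⟨hmax.1.1, fun B'' hB'' hbic =>
    le_antisymm hB'' (hmax.2 ⟨hbic, hmax.1.2.trans hB''⟩ hB'')⟩, hmax.1.2⟩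

lemma IsBlock.diff_singleton_nonempty (hB : IsBlock G B) (hB' : IsBiconn G B') (hne : B ≠ B')
    {u : V} (hu : u ∈ B') : (B \ {u}).Nonempty := by
  by_contra h
  rw [Set.not_nonempty_iff_eq_empty, Set.sdiff_eq_empty] at h
  exact hne (hB.2 B' (h.trans (Set.singleton_subset_iff.2 hu)) hB')

lemma IsBiconn.union_union_support (hB : IsBiconn G B) (hB' : IsBiconn G B') {u x y : V}
    (hu : u ∈ B) (hu' : u ∈ B') (hxB : x ∈ B) (hyB' : y ∈ B') {q : G.Walk x y}
    (hq : q.IsPath) (hqu : ∀ w ∈ q.support, w ≠ u) :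
    IsBiconn G (B ∪ B' ∪ {z | z ∈ q.support}) := by
  set S := B ∪ B' ∪ {z | z ∈ q.support}
  refine isBiconn_iff.2 ⟨⟨u, .inl (.inl hu)⟩, fun D hD => ?_⟩
  have inB : ∀ {z w}, z ∈ B \ D → w ∈ B \ D → G.ReachableIn (S \ D) z w := fun hz hw =>
    (hB.reachableIn hD hz hw).mono (Set.sdiff_subset_sdiff_left fun _ h => .inl (.inl h))
  have inB' : ∀ {z w}, z ∈ B' \ D → w ∈ B' \ D → G.ReachableIn (S \ D) z w := fun hz hw =>
    (hB'.reachableIn hD hz hw).mono (Set.sdiff_subset_sdiff_left fun _ h => .inl (.inr h))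
  have inq : ∀ {z}, z ∈ {z | z ∈ q.support} \ D →
      G.ReachableIn (S \ D) z x ∨ G.ReachableIn (S \ D) z y := fun hz =>
    (hq.reachableIn_start_or_end hD hz).imp
      (·.mono (Set.sdiff_subset_sdiff_left fun _ h => .inr h))
      (·.mono (Set.sdiff_subset_sdiff_left fun _ h => .inr h))
  by_cases huD : u ∈ D
  · have hqD : ∀ w ∈ q.support, w ∉ D := fun w hw hwD => hqu w hw (hD hwD huD)
    have hyx : G.ReachableIn (S \ D) y x :=
      ⟨q.reverse, fun w hw => by
        rw [Walk.support_reverse, List.mem_reverse] at hw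
        exact ⟨.inr hw, hqD w hw⟩⟩
    refine preconnected_induce_of_reachableIn x fun z hz => ?_
    rcases hz with ⟨(hzB | hzB') | hzq, hzD⟩
    · exact inB ⟨hzB, hzD⟩ ⟨hxB, hqD x q.start_mem_support⟩
    · exact (inB' ⟨hzB', hzD⟩ ⟨hyB', hqD y q.end_mem_support⟩).trans hyx
    · exact (inq ⟨hzq, hzD⟩).elim id (·.trans hyx)
  · refine preconnected_induce_of_reachableIn u fun z hz => ?_
    rcases hz with ⟨(hzB | hzB') | hzq, hzD⟩
    · exact inB ⟨hzB, hzD⟩ ⟨hu, huD⟩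
    · exact inB' ⟨hzB', hzD⟩ ⟨hu', huD⟩
    · rcases inq ⟨hzq, hzD⟩ with h | h
      · exact h.trans (inB ⟨hxB, h.right_mem.2⟩ ⟨hu, huD⟩)
      · exact h.trans (inB' ⟨hyB', h.right_mem.2⟩ ⟨hu', huD⟩)

lemma IsBlock.isCutVertex_of_mem_of_mem (hG : G.Connected) (hB : IsBlock G B)
    (hB' : IsBlock G B') (hne : B ≠ B') {u : V} (hu : u ∈ B) (hu' : u ∈ B') :
    IsCutVertex G u := by
  by_contra hcut
  obtain ⟨x, hxB, hxu⟩ := hB.diff_singleton_nonempty hB'.1 hne hu'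
  obtain ⟨y, hyB', hyu⟩ := hB'.diff_singleton_nonempty hB.1 hne.symm hu
  have hxy : G.ReachableIn {w | w ≠ u} x y := by
    by_contra h
    exact hcut ⟨⟨x, hxu⟩, ⟨y, hyu⟩, hG.preconnected x y,
      fun h' => h (reachableIn_iff_reachable_induce.2 h')⟩
  obtain ⟨q, hq, hqu⟩ := hxy.exists_isPath
  have hBS := hB.2 _ (fun _ h => .inl (.inl h))
    (hB.1.union_union_support hB'.1 hu hu' hxB hyB' hq hqu)
  exact hne (hB'.2 B (hBS ▸ fun _ h => .inl (.inr h)) hB.1).symm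

lemma IsBiconn.adj_of_eq_pair {a b : V} (h : IsBiconn G {a, b}) (hab : a ≠ b) : G.Adj a b := by
  obtain ⟨p, hp⟩ := h.reachableIn Set.subsingleton_empty (x := a) (y := b) (by simp) (by simp)
  cases p with
  | nil => exact absurd rfl hab
  | @cons _ c _ hac q =>
    rcases hp c (by simp) with ⟨rfl | rfl, -⟩
    · exact absurd rfl hac.ne
    · exact hac

end Biconnected

section BlockTree

variable {V : Type*} {G : SimpleGraph V}

-- Typed as `BTVert G` rather than as a sum, so that rewriting under walks of `blockTree G` works.
def BTVert.ofCut (v : {v : V // IsCutVertex G v}) : BTVert G := Sum.inl v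

def BTVert.ofBlock (B : {B : Set V // IsBlock G B}) : BTVert G := Sum.inr B

lemma BTVert.eq_ofCut_or_eq_ofBlock (x : BTVert G) :
    (∃ v, x = .ofCut v) ∨ ∃ B, x = .ofBlock B := by
  obtain v | B := x
  exacts [.inl ⟨v, rfl⟩, .inr ⟨B, rfl⟩]

lemma BTVert.ofCut_injective : Function.Injective (BTVert.ofCut (G := G)) :=
  Sum.inl_injective

lemma BTVert.ofBlock_injective : Function.Injective (BTVert.ofBlock (G := G)) :=
  Sum.inr_injective

@[simp]
lemma BTVert.ofCut_ne_ofBlock {v : {v : V // IsCutVertex G v}} {B : {B : Set V // IsBlock G B}} :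
    BTVert.ofCut v ≠ .ofBlock B :=
  Sum.inl_ne_inr

@[simp]
lemma blockTree_adj_ofCut_ofBlock {v : {v : V // IsCutVertex G v}}
    {B : {B : Set V // IsBlock G B}} :
    (blockTree G).Adj (.ofCut v) (.ofBlock B) ↔ v.1 ∈ B.1 := by
  refine ⟨?_, fun h => .inl ⟨v, B, rfl, rfl, h⟩⟩
  rintro (⟨_, _, h₁, h₂, h⟩ | ⟨_, _, h₁, -, -⟩)
  · cases h₁; cases h₂; exact h
  · cases h₁

@[simp]
lemma blockTree_adj_ofBlock_ofCut {v : {v : V // IsCutVertex G v}}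
    {B : {B : Set V // IsBlock G B}} :
    (blockTree G).Adj (.ofBlock B) (.ofCut v) ↔ v.1 ∈ B.1 :=
  (blockTree G).adj_comm _ _ |>.trans blockTree_adj_ofCut_ofBlock

@[simp]
lemma not_blockTree_adj_ofCut_ofCut {v v' : {v : V // IsCutVertex G v}} :
    ¬ (blockTree G).Adj (.ofCut v) (.ofCut v') := by
  rintro (⟨_, _, -, h, -⟩ | ⟨_, _, h, -, -⟩) <;> cases h

@[simp]
lemma not_blockTree_adj_ofBlock_ofBlock {B B' : {B : Set V // IsBlock G B}} :
    ¬ (blockTree G).Adj (.ofBlock B) (.ofBlock B') := by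
  rintro (⟨_, _, h, -, -⟩ | ⟨_, _, -, h, -⟩) <;> cases h

lemma blockTree_reachable_of_mem_of_mem (hG : G.Connected) {B B' : {B : Set V // IsBlock G B}}
    {u : V} (hu : u ∈ B.1) (hu' : u ∈ B'.1) :
    (blockTree G).Reachable (.ofBlock B) (.ofBlock B') := by
  by_cases he : B = B'
  · rw [he]
  · let c : {v : V // IsCutVertex G v} :=
      ⟨u, B.2.isCutVertex_of_mem_of_mem hG B'.2 (fun h => he (Subtype.ext h)) hu hu'⟩
    exact (blockTree_adj_ofBlock_ofCut (v := c).2 hu).reachable.trans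
      (blockTree_adj_ofCut_ofBlock (v := c).2 hu').reachable

lemma blockTree_reachable_of_walk [Finite V] (hG : G.Connected) {u u' : V} (p : G.Walk u u')
    {B B' : {B : Set V // IsBlock G B}} (hu : u ∈ B.1) (hu' : u' ∈ B'.1) :
    (blockTree G).Reachable (.ofBlock B) (.ofBlock B') := by
  induction p generalizing B with
  | nil => exact blockTree_reachable_of_mem_of_mem hG hu hu'
  | cons hab q ih =>
    obtain ⟨B₂, hB₂, hsub⟩ := (isBiconn_pair hab).exists_isBlock_superset
    exact (blockTree_reachable_of_mem_of_mem hG hu (B' := ⟨B₂, hB₂⟩) (hsub (by simp))).trans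
      (ih (B := ⟨B₂, hB₂⟩) (hsub (by simp)) hu')

lemma blockTree_preconnected [Finite V] (hG : G.Connected) : (blockTree G).Preconnected := by
  have hblock : ∀ x : BTVert G, ∃ B, (blockTree G).Reachable x (.ofBlock B) := by
    intro x
    obtain ⟨v, rfl⟩ | ⟨B, rfl⟩ := x.eq_ofCut_or_eq_ofBlock
    · obtain ⟨B, hB, hv⟩ := (isBiconn_singleton (G := G) v.1).exists_isBlock_superset
      exact ⟨⟨B, hB⟩, (blockTree_adj_ofCut_ofBlock.2 (hv rfl)).reachable⟩
    · exact ⟨B, .rfl⟩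
  intro x y
  obtain ⟨B, hxB⟩ := hblock x
  obtain ⟨B', hyB'⟩ := hblock y
  obtain ⟨u, hu⟩ := B.2.1.1
  obtain ⟨u', hu'⟩ := B'.2.1.1
  obtain ⟨p⟩ := hG.preconnected u u'
  exact (hxB.trans (blockTree_reachable_of_walk hG p hu hu')).trans hyB'.symm

def blockUnion {s t : BTVert G} (p : (blockTree G).Walk s t) : Set V :=
  {z | ∃ B, .ofBlock B ∈ p.support ∧ z ∈ B.1}

lemma subset_blockUnion {s t : BTVert G} {p : (blockTree G).Walk s t}
    {B : {B : Set V // IsBlock G B}} (h : .ofBlock B ∈ p.support) : B.1 ⊆ blockUnion p :=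
  fun _ hz => ⟨B, h, hz⟩

@[simp]
lemma blockUnion_nil_ofCut (v : {v : V // IsCutVertex G v}) :
    blockUnion (.nil : (blockTree G).Walk (.ofCut v) _) = ∅ := by
  ext; simp [blockUnion, eq_comm]

@[simp]
lemma blockUnion_nil_ofBlock (B : {B : Set V // IsBlock G B}) :
    blockUnion (.nil : (blockTree G).Walk (.ofBlock B) _) = B.1 := by
  ext; simp [blockUnion, BTVert.ofBlock_injective.eq_iff]

@[simp]
lemma blockUnion_cons_ofCut {v : {v : V // IsCutVertex G v}} {s t : BTVert G}
    (h : (blockTree G).Adj (.ofCut v) s) (q : (blockTree G).Walk s t) :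
    blockUnion (.cons h q) = blockUnion q := by
  ext; simp [blockUnion, eq_comm]

@[simp]
lemma blockUnion_cons_ofBlock {B : {B : Set V // IsBlock G B}} {s t : BTVert G}
    (h : (blockTree G).Adj (.ofBlock B) s) (q : (blockTree G).Walk s t) :
    blockUnion (.cons h q) = B.1 ∪ blockUnion q := by
  ext; simp [blockUnion, BTVert.ofBlock_injective.eq_iff, or_and_right, exists_or]

lemma blockUnion_append {s u t : BTVert G} (p : (blockTree G).Walk s u)
    (q : (blockTree G).Walk u t) : blockUnion (p.append q) = blockUnion p ∪ blockUnion q := by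
  ext; simp [blockUnion, or_and_right, exists_or]

@[simp]
lemma blockUnion_reverse {s t : BTVert G} (p : (blockTree G).Walk s t) :
    blockUnion p.reverse = blockUnion p := by
  simp [blockUnion]

end BlockTree

section Acyclic

variable {V : Type*} {G : SimpleGraph V}

lemma mem_blockUnion_cons_ofCut {v : {v : V // IsCutVertex G v}} {s t : BTVert G}
    (h : (blockTree G).Adj (.ofCut v) s) (q : (blockTree G).Walk s t) :
    v.1 ∈ blockUnion (.cons h q) := by
  obtain ⟨w, rfl⟩ | ⟨B, rfl⟩ := s.eq_ofCut_or_eq_ofBlock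
  · exact absurd h not_blockTree_adj_ofCut_ofCut
  · exact subset_blockUnion (List.mem_cons_of_mem _ q.start_mem_support)
      (blockTree_adj_ofCut_ofBlock.1 h)

lemma preconnected_induce_blockUnion_sdiff {s t : BTVert G} (p : (blockTree G).Walk s t)
    (hp : p.IsPath) {D : Set V} (hD : D.Subsingleton)
    (hlinks : ∀ v, .ofCut v ∈ p.support → .ofCut v ≠ t → v.1 ∉ D) :
    (G.induce (blockUnion p \ D)).Preconnected := by
  induction p with
  | nil =>
    rename_i x
    obtain ⟨v, rfl⟩ | ⟨B, rfl⟩ := x.eq_ofCut_or_eq_ofBlock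
    · rw [blockUnion_nil_ofCut]
      exact preconnected_induce_of_subsingleton (Set.subsingleton_empty.anti Set.sdiff_subset)
    · rw [blockUnion_nil_ofBlock]
      exact (isBiconn_iff.1 B.2.1).2 D hD
  | cons h q ih =>
    rename_i x y _
    have ihq := ih hp.of_cons fun v hv => hlinks v (List.mem_cons_of_mem _ hv)
    obtain ⟨v, rfl⟩ | ⟨B, rfl⟩ := x.eq_ofCut_or_eq_ofBlock
    · rwa [blockUnion_cons_ofCut]
    obtain ⟨v, rfl⟩ | ⟨B', rfl⟩ := y.eq_ofCut_or_eq_ofBlock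
    swap
    · exact absurd h not_blockTree_adj_ofBlock_ofBlock
    have hB := (isBiconn_iff.1 B.2.1).2 D hD
    rw [blockUnion_cons_ofBlock, Set.union_sdiff_distrib]
    cases q with
    | nil => rwa [blockUnion_nil_ofCut, Set.empty_sdiff, Set.union_empty]
    | cons h' q' =>
      have hpath := ((Walk.cons_isPath_iff _ _).1 hp.of_cons).2
      have hvD : v.1 ∉ D := hlinks v (List.mem_cons_of_mem _ (Walk.start_mem_support _))
        fun he => hpath (he ▸ q'.end_mem_support)
      exact (induce_union_connected hB ihq ⟨v.1, ⟨blockTree_adj_ofBlock_ofCut.1 h, hvD⟩,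
        mem_blockUnion_cons_ofCut h' q', hvD⟩).preconnected

/-- Together with `v`, the path closes up to a cycle of blocks. -/
lemma isBiconn_blockUnion {B₁ B : {B : Set V // IsBlock G B}}
    (p : (blockTree G).Walk (.ofBlock B₁) (.ofBlock B)) (hp : p.IsPath)
    {v : {v : V // IsCutVertex G v}} (hv₁ : v.1 ∈ B₁.1) (hv : v.1 ∈ B.1)
    (hvp : .ofCut v ∉ p.support) : IsBiconn G (blockUnion p) := by
  refine isBiconn_iff.2 ⟨⟨v.1, subset_blockUnion p.start_mem_support hv₁⟩, fun D hD => ?_⟩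
  by_cases hlink : ∃ w, .ofCut w ∈ p.support ∧ w.1 ∈ D
  · obtain ⟨w, hw, hwD⟩ := hlink
    obtain ⟨p₁, p₂, hp₁, hp₂, rfl⟩ := hp.mem_support_iff_exists_append.1 hw
    have hlinks : ∀ {s} (q : (blockTree G).Walk s (.ofCut w)),
        ∀ u, .ofCut u ∈ q.support → .ofCut u ≠ BTVert.ofCut w → u.1 ∉ D :=
      fun _ u _ hu huD => hu (congrArg _ (Subtype.ext (hD huD hwD)))
    have hvD : v.1 ∉ D := fun h => hvp (Subtype.ext (hD h hwD) ▸ hw)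
    have h₂ := preconnected_induce_blockUnion_sdiff p₂.reverse hp₂.reverse hD (hlinks _)
    rw [blockUnion_reverse] at h₂
    rw [blockUnion_append, Set.union_sdiff_distrib]
    have h₁ := preconnected_induce_blockUnion_sdiff p₁ hp₁ hD (hlinks p₁)
    exact (induce_union_connected h₁ h₂
      ⟨v.1, ⟨subset_blockUnion p₁.start_mem_support hv₁, hvD⟩,
        ⟨subset_blockUnion p₂.end_mem_support hv, hvD⟩⟩).preconnected
  · push Not at hlink
    exact preconnected_induce_blockUnion_sdiff p hp hD fun w hw _ => hlink w hw

lemma mem_edges_of_walk_ofCut_ofBlock {v : {v : V // IsCutVertex G v}}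
    {B : {B : Set V // IsBlock G B}} (hvB : v.1 ∈ B.1)
    (p : (blockTree G).Walk (.ofCut v) (.ofBlock B)) : s(.ofCut v, .ofBlock B) ∈ p.edges := by
  suffices ∀ q : (blockTree G).Walk (.ofCut v) (.ofBlock B), q.IsPath →
      s(.ofCut v, .ofBlock B) ∈ q.edges from
    Walk.edges_toPath_subset_edges p (this _ p.toPath.2)
  intro q hq
  obtain ⟨y, h, q', rfl⟩ := Walk.exists_eq_cons_of_ne BTVert.ofCut_ne_ofBlock q
  obtain ⟨w, rfl⟩ | ⟨B₁, rfl⟩ := y.eq_ofCut_or_eq_ofBlock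
  · exact absurd h not_blockTree_adj_ofCut_ofCut
  by_cases hB₁ : B₁ = B
  · subst hB₁
    exact List.mem_cons_self
  rw [Walk.cons_isPath_iff] at hq
  have hU := isBiconn_blockUnion q' hq.1 (blockTree_adj_ofCut_ofBlock.1 h) hvB hq.2
  have hBU : B.1 = blockUnion q' := B.2.2 _ (subset_blockUnion q'.end_mem_support) hU
  exact absurd (Subtype.ext (B₁.2.2 B (hBU ▸ subset_blockUnion q'.start_mem_support) B.2.1))
    hB₁

lemma blockTree_isAcyclic : (blockTree G).IsAcyclic := by
  refine isAcyclic_iff_forall_adj_isBridge.2 fun x y hxy => ?_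
  obtain ⟨v, rfl⟩ | ⟨B, rfl⟩ := x.eq_ofCut_or_eq_ofBlock <;>
    obtain ⟨w, rfl⟩ | ⟨B', rfl⟩ := y.eq_ofCut_or_eq_ofBlock
  · exact absurd hxy not_blockTree_adj_ofCut_ofCut
  · exact isBridge_iff_forall_walk_mem_edges.2
      (mem_edges_of_walk_ofCut_ofBlock (blockTree_adj_ofCut_ofBlock.1 hxy))
  · rw [Sym2.eq_swap]
    exact isBridge_iff_forall_walk_mem_edges.2
      (mem_edges_of_walk_ofCut_ofBlock (blockTree_adj_ofBlock_ofCut.1 hxy))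
  · exact absurd hxy not_blockTree_adj_ofBlock_ofBlock

end Acyclic

section Centroid

variable {N : Type*} [Fintype N] {T : SimpleGraph N} {w : N → ℕ}

lemma compWeight_eq_sum (m u : N) :
    compWeight T w m u = ∑ y, if T.ReachableIn {m}ᶜ u y then w y else 0 := by
  simp only [compWeight, reachableIn_compl_singleton_iff]

lemma compWeight_le_hs (m u : N) : compWeight T w m u ≤ hs T w m :=
  Finset.le_sup (Finset.mem_univ u)

lemma exists_hs_eq_compWeight [Nonempty N] (m : N) : ∃ u, hs T w m = compWeight T w m u :=
  let ⟨u, _, hu⟩ := Finset.exists_mem_eq_sup Finset.univ Finset.univ_nonempty (compWeight T w m)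
  ⟨u, hu⟩

lemma compWeight_mono {m m' u u' : N}
    (h : ∀ y, T.ReachableIn {m}ᶜ u y → T.ReachableIn {m'}ᶜ u' y) :
    compWeight T w m u ≤ compWeight T w m' u' := by
  simp only [compWeight_eq_sum]
  refine Finset.sum_le_sum fun y _ => ?_
  split_ifs with h₁ h₂
  · exact le_rfl
  · exact absurd (h y h₁) h₂
  all_goals exact Nat.zero_le _

lemma compWeight_congr {m u u' : N} (h : T.ReachableIn {m}ᶜ u u') :
    compWeight T w m u = compWeight T w m u' :=
  le_antisymm (compWeight_mono fun _ hy => h.symm.trans hy) (compWeight_mono fun _ hy => h.trans hy)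

lemma le_compWeight {m u : N} (h : u ≠ m) : w u ≤ compWeight T w m u := by
  rw [compWeight_eq_sum]
  calc w u = if T.ReachableIn {m}ᶜ u u then w u else 0 := (if_pos (.refl h)).symm
    _ ≤ _ := Finset.single_le_sum (f := fun y => if T.ReachableIn {m}ᶜ u y then w y else 0)
      (fun _ _ => Nat.zero_le _) (Finset.mem_univ u)

lemma hs_le_max_of_not_reachableIn {m x y : N} (hsep : ¬ T.ReachableIn {m}ᶜ x y) :
    hs T w m ≤ max (hs T w x) (hs T w y) := by
  have : Nonempty N := ⟨x⟩
  obtain ⟨z, hz⟩ := exists_hs_eq_compWeight (T := T) (w := w) m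
  rw [hz]
  by_cases hxz : T.ReachableIn {m}ᶜ x z
  · refine le_max_of_le_right ((compWeight_mono fun t ht => ?_).trans (compWeight_le_hs y z))
    exact (ht.sdiff_singleton fun hzy => hsep (hxz.trans hzy)).mono fun _ h => h.2
  · refine le_max_of_le_left ((compWeight_mono fun t ht => ?_).trans (compWeight_le_hs x z))
    exact (ht.sdiff_singleton fun hzx => hxz hzx.symm).mono fun _ h => h.2

lemma IsCentroid.of_not_reachableIn {m x y : N} (hx : IsCentroid T w x) (hy : IsCentroid T w y)
    (hsep : ¬ T.ReachableIn {m}ᶜ x y) : IsCentroid T w m :=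
  fun u => hs_le_max_of_not_reachableIn hsep |>.trans (max_le (hx u) (hy u))

/-- The components of `T - m` met by pairwise separated vertices are disjoint and avoid `m`. -/
lemma sum_compWeight_add_le (m : N) {s : Finset N}
    (hs : (s : Set N).Pairwise fun p q => ¬ T.ReachableIn {m}ᶜ p q) :
    ∑ p ∈ s, compWeight T w m p + w m ≤ ∑ y, w y := by
  have hy : ∀ y, ∑ p ∈ s, (if T.ReachableIn {m}ᶜ p y then w y else 0) +
      (if y = m then w y else 0) ≤ w y := by
    intro y
    rw [Finset.sum_ite, Finset.sum_const_zero, add_zero, Finset.sum_const, smul_eq_mul]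
    split_ifs with hym
    · rw [Finset.filter_false_of_mem fun p _ hp => hp.right_mem hym]
      simp
    · refine Nat.add_zero _ ▸ mul_le_of_le_one_left (Nat.zero_le _) (Finset.card_le_one.2 ?_)
      intro p hp q hq
      simp only [Finset.mem_filter] at hp hq
      by_contra hpq
      exact hs hp.1 hq.1 hpq (hp.2.trans hq.2.symm)
  calc ∑ p ∈ s, compWeight T w m p + w m
      = ∑ y, (∑ p ∈ s, (if T.ReachableIn {m}ᶜ p y then w y else 0) +
          (if y = m then w y else 0)) := by
        simp only [compWeight_eq_sum, Finset.sum_add_distrib, Finset.sum_ite_eq',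
          Finset.mem_univ, if_true]
        rw [Finset.sum_comm]
    _ ≤ ∑ y, w y := Finset.sum_le_sum fun y _ => hy y

end Centroid

namespace SimpleGraph

variable {N : Type*} {T : SimpleGraph N}

lemma reachableIn_compl_or_of_adj (hconn : T.Preconnected) {u v : N} (huv : T.Adj u v)
    (y : N) : T.ReachableIn {u}ᶜ v y ∨ T.ReachableIn {v}ᶜ u y := by
  obtain ⟨p, hp⟩ := hconn.exists_isPath v y
  by_cases hu : u ∈ p.support
  · obtain ⟨p₁, p₂, -, -, rfl⟩ := hp.mem_support_iff_exists_append.1 hu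
    exact .inr ⟨p₂, fun z hz hzv =>
      hp.ne_of_mem_support_of_append huv.ne' p₁.start_mem_support (hzv ▸ hz) rfl⟩
  · exact .inl ⟨p, fun z hz hzu => hu (hzu ▸ hz)⟩

lemma IsAcyclic.not_reachableIn_compl_and_of_adj (hacy : T.IsAcyclic) {u v y : N}
    (huv : T.Adj u v) : ¬ (T.ReachableIn {u}ᶜ v y ∧ T.ReachableIn {v}ᶜ u y) := by
  rintro ⟨hv, hu⟩
  obtain ⟨p, hp, hpu⟩ := hv.exists_isPath
  obtain ⟨q, hq, hqv⟩ := hu.exists_isPath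
  have := hacy.mem_support_of_ne_mem_support_of_adj_of_isPath hq.reverse hp.reverse huv
    (fun h => hpu u (by simpa using h) rfl)
  exact hqv v (by simpa using this) rfl

lemma IsAcyclic.not_reachableIn_compl_of_adj_of_adj (hacy : T.IsAcyclic) {m t₁ t₂ : N}
    (h₁ : T.Adj m t₁) (h₂ : T.Adj m t₂) (hne : t₁ ≠ t₂) :
    ¬ T.ReachableIn {m}ᶜ t₁ t₂ := by
  intro h
  obtain ⟨p, hp, hpm⟩ := h.exists_isPath
  have := hacy.mem_support_of_ne_mem_support_of_adj_of_isPath (Path.singleton h₁.symm).2 hp h₂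
    (fun h => hpm m h rfl)
  simp only [Path.singleton_coe, Walk.support_cons, Walk.support_nil, List.mem_cons,
    List.not_mem_nil, or_false] at this
  exact this.elim (fun h => hne h.symm) h₂.ne'

lemma IsAcyclic.exists_adj_not_reachableIn_compl (hacy : T.IsAcyclic) {x y : N}
    (hxy : T.Reachable x y) (hne : x ≠ y) (hnadj : ¬ T.Adj x y) :
    ∃ m, T.Adj x m ∧ m ≠ y ∧ ¬ T.ReachableIn {m}ᶜ x y := by
  obtain ⟨p, hp⟩ := hxy.exists_isPath
  obtain ⟨m, h, p', rfl⟩ := Walk.exists_eq_cons_of_ne hne p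
  refine ⟨m, h, fun hmy => hnadj (hmy ▸ h), fun hsep => ?_⟩
  obtain ⟨q, hq, hqm⟩ := hsep.exists_isPath
  obtain rfl : q = _ :=
    congrArg Subtype.val ((hacy.subsingleton_path x y).elim ⟨q, hq⟩ ⟨_, hp⟩)
  exact hqm m (by simp) rfl

variable [Fintype N] {w : N → ℕ}

lemma compWeight_add_compWeight_of_adj (hconn : T.Preconnected) (hacy : T.IsAcyclic) {u v : N}
    (huv : T.Adj u v) : compWeight T w u v + compWeight T w v u = ∑ y, w y := by
  simp only [compWeight_eq_sum, ← Finset.sum_add_distrib]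
  refine Finset.sum_congr rfl fun y _ => ?_
  have := hacy.not_reachableIn_compl_and_of_adj huv (y := y)
  rcases reachableIn_compl_or_of_adj hconn huv y with h | h
  · rw [if_pos h, if_neg fun h' => this ⟨h, h'⟩, add_zero]
  · rw [if_neg fun h' => this ⟨h', h⟩, if_pos h, zero_add]

end SimpleGraph

section TreeCentroid

variable {N : Type*} [Fintype N] {T : SimpleGraph N} {w : N → ℕ}

lemma compWeight_add_compWeight_add_le {m p q : N} (hpq : p ≠ q)
    (hsep : ¬ T.ReachableIn {m}ᶜ p q) :
    compWeight T w m p + compWeight T w m q + w m ≤ ∑ y, w y := by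
  have := sum_compWeight_add_le (T := T) (w := w) m (s := {p, q}) (by
    rw [Finset.coe_pair, Set.pairwise_pair]
    exact fun _ => ⟨hsep, fun h => hsep h.symm⟩)
  rwa [Finset.sum_pair hpq] at this

lemma compWeight_add_compWeight_add_compWeight_add_le {m p q r : N} (hpq : p ≠ q) (hpr : p ≠ r)
    (hqr : q ≠ r) (hpq' : ¬ T.ReachableIn {m}ᶜ p q) (hpr' : ¬ T.ReachableIn {m}ᶜ p r)
    (hqr' : ¬ T.ReachableIn {m}ᶜ q r) :
    compWeight T w m p + compWeight T w m q + compWeight T w m r + w m ≤ ∑ y, w y := by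
  have := sum_compWeight_add_le (T := T) (w := w) m (s := {p, q, r}) (by
    rw [Finset.coe_insert, Finset.coe_pair, Set.pairwise_insert, Set.pairwise_pair]
    refine ⟨fun _ => ⟨hqr', fun h => hqr' h.symm⟩, ?_⟩
    rintro x (rfl | rfl) -
    exacts [⟨hpq', fun h => hpq' h.symm⟩, ⟨hpr', fun h => hpr' h.symm⟩])
  rwa [Finset.sum_insert (by simp [hpq, hpr]), Finset.sum_pair hqr, ← add_assoc] at this

variable (hconn : T.Preconnected) (hacy : T.IsAcyclic)
  (hw : ∀ u v, T.Adj u v → w u ≠ 0 ∨ w v ≠ 0)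
include hconn hacy hw

lemma IsCentroid.weight_eq_zero_and_adj_of_hs_eq {z p q : N} (hz : IsCentroid T w z)
    (hq : IsCentroid T w q) (hzp : T.Adj z p) (hzq : T.Adj z q) (hpq : p ≠ q)
    (hhs : hs T w z = compWeight T w z p) : w z = 0 ∧ ∀ t, T.Adj z t → t = p ∨ t = q := by
  have hqz : compWeight T w q z ≤ hs T w z :=
    le_antisymm (hq z) (hz q) ▸ compWeight_le_hs q z
  have hW := compWeight_add_compWeight_of_adj (w := w) hconn hacy hzq
  have hsep := hacy.not_reachableIn_compl_of_adj_of_adj hzp hzq hpq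
  have hpair := compWeight_add_compWeight_add_le (w := w) hpq hsep
  -- Across the edge `zq`, the side of `q` weighs `∑ w - cw z q ≤ hs q = hs z = cw z p`: besides
  -- the branches of `p` and `q`, everything is weightless.
  have hz0 : w z = 0 := by omega
  refine ⟨hz0, fun t hzt => ?_⟩
  by_contra! htpq
  have := compWeight_add_compWeight_add_compWeight_add_le (w := w) hpq htpq.1.symm htpq.2.symm
    hsep (hacy.not_reachableIn_compl_of_adj_of_adj hzp hzt htpq.1.symm)
    (hacy.not_reachableIn_compl_of_adj_of_adj hzq hzt htpq.2.symm)
  have hwt : w t = 0 := Nat.le_zero.1 ((le_compWeight (T := T) hzt.ne').trans (by omega))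
  exact (hw z t hzt).elim (· hz0) (· hwt)

lemma IsCentroid.weight_eq_zero_and_adj {z p q : N} (hz : IsCentroid T w z)
    (hp : IsCentroid T w p) (hq : IsCentroid T w q) (hzp : T.Adj z p) (hzq : T.Adj z q)
    (hpq : p ≠ q) :
    w z = 0 ∧ ∀ t, T.Adj z t → t = p ∨ t = q := by
  have : Nonempty N := ⟨z⟩
  obtain ⟨y, hy⟩ := exists_hs_eq_compWeight (T := T) (w := w) z
  by_cases hpy : T.ReachableIn {z}ᶜ p y
  · exact hz.weight_eq_zero_and_adj_of_hs_eq hconn hacy hw hq hzp hzq hpq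
      (hy.trans (compWeight_congr hpy).symm)
  by_cases hqy : T.ReachableIn {z}ᶜ q y
  · obtain ⟨hz0, hadj⟩ := hz.weight_eq_zero_and_adj_of_hs_eq hconn hacy hw hp hzq hzp hpq.symm
      (hy.trans (compWeight_congr hqy).symm)
    exact ⟨hz0, fun t ht => (hadj t ht).symm⟩
  -- A third branch of `T - z` would be the heaviest; then the side of `p` across `zp` leaves no
  -- weight for `z` and the branch of `q`, two adjacent vertices.
  exfalso
  have hyp : p ≠ y := fun h => hpy (h ▸ .refl hzp.ne')
  have hyq : q ≠ y := fun h => hqy (h ▸ .refl hzq.ne')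
  have htriple := compWeight_add_compWeight_add_compWeight_add_le (w := w) hpq hyp hyq
    (hacy.not_reachableIn_compl_of_adj_of_adj hzp hzq hpq) hpy hqy
  have hW := compWeight_add_compWeight_of_adj (w := w) hconn hacy hzp
  have hpz : compWeight T w p z ≤ hs T w z := le_antisymm (hp z) (hz p) ▸ compWeight_le_hs p z
  have hq0 : w q = 0 := Nat.le_zero.1 ((le_compWeight (T := T) hzq.ne').trans (by omega))
  exact (hw z q hzq).elim (· (by omega)) (· hq0)

end TreeCentroid

section ThreeCentroids

variable {N : Type*} [Fintype N] {T : SimpleGraph N} {w : N → ℕ}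

lemma dist_le_centroidEcc (x : N) {y : N} (hy : IsCentroid T w y) :
    T.dist x y ≤ centroidEcc T w x := by
  have := Finset.le_sup (f := fun t => if IsCentroid T w t then T.dist x t else 0)
    (Finset.mem_univ y)
  rwa [if_pos hy] at this

lemma centroidEcc_le_one {z : N} (h : ∀ t, IsCentroid T w t → t = z ∨ T.Adj z t) :
    centroidEcc T w z ≤ 1 :=
  Finset.sup_le fun t _ => by
    split_ifs with ht
    · rcases h t ht with rfl | hzt
      · simp
      · exact (dist_eq_one_iff_adj.2 hzt).le
    · exact zero_le_one

variable (hconn : T.Preconnected) (hacy : T.IsAcyclic)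
include hconn hacy

lemma IsCentroid.adj_of_not_adj {x y z : N} (hx : IsCentroid T w x) (hy : IsCentroid T w y)
    (hxy : x ≠ y) (hnadj : ¬ T.Adj x y)
    (hS : ∀ m, IsCentroid T w m → m = x ∨ m = y ∨ m = z) : T.Adj x z := by
  obtain ⟨m, hxm, hmy, hsep⟩ := hacy.exists_adj_not_reachableIn_compl (hconn x y) hxy hnadj
  rcases hS m (hx.of_not_reachableIn hy hsep) with rfl | rfl | rfl
  · exact absurd hxm T.irrefl
  · exact absurd rfl hmy
  · exact hxm

variable (hw : ∀ u v, T.Adj u v → w u ≠ 0 ∨ w v ≠ 0)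
include hw

/-- With three centroids `x`, `y`, `z` and `x`, `y` not adjacent, the path of centroids is
`x - z - y`, so `z` is its centre. -/
lemma IsCentralCentroid.weight_eq_zero_and_adj_iff_of_not_adj {x y z c : N}
    (hS : {t | IsCentroid T w t} = {x, y, z}) (hxy : x ≠ y) (hnadj : ¬ T.Adj x y)
    (hc : IsCentralCentroid T w c) :
    w c = 0 ∧ ∃ p q, p ≠ q ∧ ∀ t, T.Adj c t ↔ t = p ∨ t = q := by
  have hmem : ∀ t, IsCentroid T w t ↔ t = x ∨ t = y ∨ t = z := fun t => by
    simpa using Set.ext_iff.1 hS t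
  have hx := (hmem x).2 (.inl rfl)
  have hy := (hmem y).2 (.inr (.inl rfl))
  have hz := (hmem z).2 (.inr (.inr rfl))
  have hxz := hx.adj_of_not_adj hconn hacy hy hxy hnadj fun m hm => (hmem m).1 hm
  have hyz : T.Adj y z := hy.adj_of_not_adj hconn hacy hx hxy.symm (fun h => hnadj h.symm)
    fun m hm => by rcases (hmem m).1 hm with h | h | h <;> simp [h]
  have hecc : centroidEcc T w z ≤ 1 := centroidEcc_le_one fun t ht => by
    rcases (hmem t).1 ht with rfl | rfl | rfl
    exacts [.inr hxz.symm, .inr hyz.symm, .inl rfl]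
  have hdist : 2 ≤ T.dist x y := by
    have h₀ := (hconn x y).pos_dist_of_ne hxy
    have h₁ : T.dist x y ≠ 1 := fun h => hnadj (dist_eq_one_iff_adj.1 h)
    omega
  obtain rfl : c = z := by
    rcases (hmem c).1 hc.1 with rfl | rfl | rfl
    · have := (dist_le_centroidEcc c hy).trans (hc.2 z hz)
      omega
    · have := (dist_le_centroidEcc c hx).trans (hc.2 z hz)
      rw [dist_comm] at this
      omega
    · rfl
  obtain ⟨hc0, hadj⟩ := hz.weight_eq_zero_and_adj hconn hacy hw hx hy hxz.symm hyz.symm hxy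
  exact ⟨hc0, x, y, hxy, fun t =>
    ⟨hadj t, by rintro (rfl | rfl); exacts [hxz.symm, hyz.symm]⟩⟩

theorem IsCentralCentroid.weight_eq_zero_and_adj_iff {c : N}
    (h3 : {t | IsCentroid T w t}.ncard = 3) (hc : IsCentralCentroid T w c) :
    w c = 0 ∧ ∃ p q, p ≠ q ∧ ∀ t, T.Adj c t ↔ t = p ∨ t = q := by
  obtain ⟨x, y, z, hxy, hxz, hyz, hS⟩ := Set.ncard_eq_three.1 h3
  have hperm : ∀ a b c : N, {a, b, c} = ({b, c, a} : Set N) ∧ {a, b, c} = ({a, c, b} : Set N) :=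
    fun a b c => ⟨by ext; simp only [Set.mem_insert_iff, Set.mem_singleton_iff]; tauto,
      by ext; simp only [Set.mem_insert_iff, Set.mem_singleton_iff]; tauto⟩
  by_cases hxy' : T.Adj x y
  · by_cases hxz' : T.Adj x z
    · have hyz' : ¬ T.Adj y z := fun h =>
        hacy.cliqueFree le_rfl {x, y, z} (is3Clique_triple_iff.2 ⟨hxy', hxz', h⟩)
      exact hc.weight_eq_zero_and_adj_iff_of_not_adj hconn hacy hw (hS.trans (hperm x y z).1)
        hyz hyz'
    · exact hc.weight_eq_zero_and_adj_iff_of_not_adj hconn hacy hw (hS.trans (hperm x y z).2)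
        hxz hxz'
  · exact hc.weight_eq_zero_and_adj_iff_of_not_adj hconn hacy hw hS hxy hxy'

end ThreeCentroids

section Weights

variable {V : Type*} {G : SimpleGraph V}

lemma btWeight_ofCut (v : {v : V // IsCutVertex G v}) : btWeight G (.ofCut v) = 1 :=
  rfl

lemma btWeight_ne_zero_or_of_adj {x y : BTVert G} (h : (blockTree G).Adj x y) :
    btWeight G x ≠ 0 ∨ btWeight G y ≠ 0 := by
  obtain ⟨v, rfl⟩ | ⟨B, rfl⟩ := x.eq_ofCut_or_eq_ofBlock
  · exact .inl (btWeight_ofCut v ▸ one_ne_zero)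
  obtain ⟨v, rfl⟩ | ⟨B', rfl⟩ := y.eq_ofCut_or_eq_ofBlock
  · exact .inr (btWeight_ofCut v ▸ one_ne_zero)
  · exact absurd h not_blockTree_adj_ofBlock_ofBlock

lemma exists_eq_ofBlock_of_btWeight_eq_zero {x : BTVert G} (h : btWeight G x = 0) :
    ∃ B, x = .ofBlock B := by
  obtain ⟨v, rfl⟩ | hB := x.eq_ofCut_or_eq_ofBlock
  · exact absurd h (btWeight_ofCut v ▸ one_ne_zero)
  · exact hB

lemma exists_eq_pair_of_blockTree_adj_iff [Finite V] {B : {B : Set V // IsBlock G B}}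
    (h0 : btWeight G (.ofBlock B) = 0) {p q : BTVert G} (hpq : p ≠ q)
    (hadj : ∀ t, (blockTree G).Adj (.ofBlock B) t ↔ t = p ∨ t = q) :
    ∃ a b, a ≠ b ∧ B.1 = {a, b} ∧ G.Adj a b := by
  have hcut : ∀ u ∈ B.1, IsCutVertex G u := fun u hu => by
    by_contra hnu
    have hne : (B.1 \ {v | IsCutVertex G v}).Nonempty := ⟨u, hu, hnu⟩
    exact hne.ne_empty ((Set.ncard_eq_zero (Set.toFinite _)).1 h0)
  have hcutOf :
      ∀ t, (blockTree G).Adj (.ofBlock B) t → ∃ a, t = .ofCut a ∧ a.1 ∈ B.1 := by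
    intro t ht
    obtain ⟨a, rfl⟩ | ⟨B', rfl⟩ := t.eq_ofCut_or_eq_ofBlock
    · exact ⟨a, rfl, blockTree_adj_ofBlock_ofCut.1 ht⟩
    · exact absurd ht not_blockTree_adj_ofBlock_ofBlock
  obtain ⟨a, rfl, ha⟩ := hcutOf p ((hadj p).2 (.inl rfl))
  obtain ⟨b, rfl, hb⟩ := hcutOf q ((hadj q).2 (.inr rfl))
  have hab : a.1 ≠ b.1 := fun h => hpq (congrArg _ (Subtype.ext h))
  have hBab : B.1 = {a.1, b.1} := by
    refine Set.Subset.antisymm (fun u hu => ?_)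
      (Set.insert_subset ha (Set.singleton_subset_iff.2 hb))
    rcases (hadj (.ofCut ⟨u, hcut u hu⟩)).1 (blockTree_adj_ofBlock_ofCut.2 hu) with h | h
    exacts [.inl (congrArg Subtype.val (BTVert.ofCut_injective h)),
      .inr (congrArg Subtype.val (BTVert.ofCut_injective h))]
  exact ⟨a.1, b.1, hab, hBab, (hBab ▸ B.2.1).adj_of_eq_pair hab⟩

end Weights

/-- If the weighted block tree of a connected graph G has exactly three centroids, then
its central centroid is a block vertex of weight 0 whose block is a K2 (an edge of G). -/
theorem stmt_13 {V : Type*} [Fintype V] (G : SimpleGraph V) [Fintype (BTVert G)]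
    (hG : G.Connected)
    (h3 : {x : BTVert G | IsCentroid (blockTree G) (btWeight G) x}.ncard = 3)
    (c : BTVert G) (hc : IsCentralCentroid (blockTree G) (btWeight G) c) :
    btWeight G c = 0 ∧
    ∃ B : {B : Set V // IsBlock G B}, c = Sum.inr B ∧
      ∃ a b : V, a ≠ b ∧ B.1 = {a, b} ∧ G.Adj a b := by
  obtain ⟨hc0, p, q, hpq, hadj⟩ := hc.weight_eq_zero_and_adj_iff (blockTree_preconnected hG)
    blockTree_isAcyclic (fun _ _ => btWeight_ne_zero_or_of_adj) h3
  obtain ⟨B, rfl⟩ := exists_eq_ofBlock_of_btWeight_eq_zero hc0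
  exact ⟨hc0, B, rfl, exists_eq_pair_of_blockTree_adj_iff hc0 hpq hadj⟩
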